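/- arXiv:2604.24463 — 3 statements merged into one kernel-verified Lean document; each statement's English description precedes it below -/
import Mathlib

section
/- Suppose a nonnegative sequence $(z_\ell)_{\ell=0}^H$ satisfies $z_{\ell+1} \le T_{a_\ell}(z_\ell) + b_\ell$ for $\ell = 0, \dots, H-1$, where $a_\ell, b_\ell \ge 0$. Then $z_H \le T_{\sum_{\ell=0}^{H-1} a_\ell}(z_0) + \sum_{\ell=0}^{H-1} b_\ell$. -/
/-- `T a u = u / (1 + a*u)` -/
noncomputable def T (a u : ℝ) : ℝ := u / (1 + a * u)

lemma one_add_pos {a u : ℝ} (ha : 0 ≤ a) (hu : 0 ≤ u) : 0 < 1 + a * u := by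
  nlinarith

lemma T_nonneg {a u : ℝ} (ha : 0 ≤ a) (hu : 0 ≤ u) : 0 ≤ T a u :=
  div_nonneg hu (one_add_pos ha hu).le

lemma T_mono {a u v : ℝ} (ha : 0 ≤ a) (hu : 0 ≤ u) (huv : u ≤ v) :
    T a u ≤ T a v := by
  have hv : 0 ≤ v := hu.trans huv
  rw [T, T, div_le_div_iff₀ (one_add_pos ha hu) (one_add_pos ha hv)]
  nlinarith

lemma T_add_le {a u c : ℝ} (ha : 0 ≤ a) (hu : 0 ≤ u) (hc : 0 ≤ c) :
    T a (u + c) ≤ T a u + c := by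
  have h1 := one_add_pos ha hu
  have h2 := one_add_pos ha (add_nonneg hu hc)
  rw [T, T, div_add' _ _ _ h1.ne', div_le_div_iff₀ h2 h1]
  nlinarith [mul_nonneg (mul_nonneg ha hc) hu, mul_nonneg ha (mul_nonneg hc hc),
    mul_nonneg (mul_nonneg (mul_nonneg ha ha) hc) (mul_nonneg hu hu),
    mul_nonneg (mul_nonneg (mul_nonneg ha ha) (mul_nonneg hc hc)) hu]

lemma T_comp {a a' u : ℝ} (ha : 0 ≤ a) (ha' : 0 ≤ a') (hu : 0 ≤ u) :
    T a (T a' u) = T (a + a') u := by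
  have h1 := one_add_pos ha' hu
  have h2 := one_add_pos (add_nonneg ha ha') hu
  rw [T, T, T]
  have hd : 1 + a * (u / (1 + a' * u)) = (1 + (a + a') * u) / (1 + a' * u) := by
    field_simp; ring
  rw [hd, div_div_eq_mul_div, div_mul_cancel₀ _ h1.ne']

theorem branch_telescoping (H : ℕ) (z a b : ℕ → ℝ)
    (hz : ∀ ℓ, 0 ≤ z ℓ) (ha : ∀ ℓ, 0 ≤ a ℓ) (hb : ∀ ℓ, 0 ≤ b ℓ)
    (hrec : ∀ ℓ < H, z (ℓ + 1) ≤ T (a ℓ) (z ℓ) + b ℓ) :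
    z H ≤ T (∑ ℓ ∈ Finset.range H, a ℓ) (z 0) + ∑ ℓ ∈ Finset.range H, b ℓ := by
  induction H with
  | zero =>
    simp [T, hz 0]
  | succ n ih =>
    have hA : 0 ≤ ∑ ℓ ∈ Finset.range n, a ℓ :=
      Finset.sum_nonneg fun i _ => ha i
    have hB : 0 ≤ ∑ ℓ ∈ Finset.range n, b ℓ :=
      Finset.sum_nonneg fun i _ => hb i
    have ih' := ih (fun ℓ hℓ => hrec ℓ (hℓ.trans (Nat.lt_succ_self n)))
    calc z (n + 1) ≤ T (a n) (z n) + b n := hrec n (Nat.lt_succ_self n)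
      _ ≤ T (a n) (T (∑ ℓ ∈ Finset.range n, a ℓ) (z 0) + ∑ ℓ ∈ Finset.range n, b ℓ) + b n := by
          gcongr
          exact T_mono (ha n) (hz n) ih'
      _ ≤ (T (a n) (T (∑ ℓ ∈ Finset.range n, a ℓ) (z 0)) + ∑ ℓ ∈ Finset.range n, b ℓ) + b n := by
          gcongr
          exact T_add_le (ha n) (T_nonneg hA (hz 0)) hB
      _ = T (∑ ℓ ∈ Finset.range (n+1), a ℓ) (z 0) + ∑ ℓ ∈ Finset.range (n+1), b ℓ := by
          rw [T_comp (ha n) hA (hz 0), Finset.sum_range_succ, Finset.sum_range_succ]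
          ring
end

section
/- Suppose nonnegative sequences $(g_t)$ and $(q_t)$ satisfy $g_{t+1} \le (1-a) g_t + \gamma q_t + \delta$ and $q_{t+1} \le A + B g_t + C q_t$, where $a, \gamma, \delta, A, B \ge 0$, $0 \le C < 1$, $0 < a < 1 - C$, and $a(1-C) > B\gamma$. Define $\rho := \frac{a + (1-C) - \sqrt{(1-C-a)^2 + 4B\gamma}}{2}$ and $\lambda := \frac{2\gamma}{1 - C - a + \sqrt{(1-C-a)^2 + 4B\gamma}}$. Then $s_t := g_t + \lambda q_t$ satisfies $s_{t+1} \le (1-\rho) s_t + \delta + \lambda A$, and therefore $g_t \le (1-\rho)^t (g_0 + \lambda q_0) + \frac{\delta + \lambda A}{\rho}$ for all $t \ge 0$. -/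
theorem coupled_linear_contraction
    (g q : ℕ → ℝ) (a γ δ A B C : ℝ)
    (hg : ∀ t, 0 ≤ g t) (hq : ∀ t, 0 ≤ q t)
    (ha0 : 0 ≤ a) (hγ : 0 ≤ γ) (hδ : 0 ≤ δ) (hA : 0 ≤ A) (hB : 0 ≤ B)
    (hC0 : 0 ≤ C) (hC1 : C < 1) (ha : 0 < a) (haC : a < 1 - C)
    (hprod : B * γ < a * (1 - C))
    (hrecg : ∀ t, g (t + 1) ≤ (1 - a) * g t + γ * q t + δ)
    (hrecq : ∀ t, q (t + 1) ≤ A + B * g t + C * q t) :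
    let ρ : ℝ := (a + (1 - C) - Real.sqrt ((1 - C - a) ^ 2 + 4 * B * γ)) / 2
    let lam : ℝ := 2 * γ / (1 - C - a + Real.sqrt ((1 - C - a) ^ 2 + 4 * B * γ))
    (∀ t, g (t + 1) + lam * q (t + 1) ≤ (1 - ρ) * (g t + lam * q t) + (δ + lam * A)) ∧
    (∀ t, g t ≤ (1 - ρ) ^ t * (g 0 + lam * q 0) + (δ + lam * A) / ρ) := by
  intro ρ lam
  have hnn : (0:ℝ) ≤ (1 - C - a) ^ 2 + 4 * B * γ := by positivity
  set S := Real.sqrt ((1 - C - a) ^ 2 + 4 * B * γ) with hSdef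
  have hS2 : S ^ 2 = (1 - C - a) ^ 2 + 4 * B * γ := Real.sq_sqrt hnn
  have hS0 : 0 ≤ S := Real.sqrt_nonneg _
  have hD : 0 < 1 - C - a := by linarith
  have hDS : 1 - C - a ≤ S := by nlinarith [mul_nonneg hB hγ]
  have hSlt : S < a + (1 - C) := by nlinarith
  have hden : 0 < 1 - C - a + S := by linarith
  have hρdef : ρ = (a + (1 - C) - S) / 2 := rfl
  have hlamdef : lam = 2 * γ / (1 - C - a + S) := rfl
  have hρ0 : 0 < ρ := by rw [hρdef]; linarith
  have hρa : ρ ≤ a := by rw [hρdef]; linarith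
  have h1ρ : 0 ≤ 1 - ρ := by linarith
  have hlam0 : 0 ≤ lam := by rw [hlamdef]; positivity
  have hlamB : lam * B = a - ρ := by
    rw [hlamdef, hρdef]
    field_simp
    nlinarith [hS2]
  have hlamkey : lam * (1 - C - ρ) = γ := by
    rw [hlamdef, hρdef]
    field_simp
    ring
  have hstep : ∀ t, g (t + 1) + lam * q (t + 1) ≤
      (1 - ρ) * (g t + lam * q t) + (δ + lam * A) := by
    intro t
    have h2 := mul_le_mul_of_nonneg_left (hrecq t) hlam0
    calc g (t + 1) + lam * q (t + 1)
        ≤ ((1 - a) * g t + γ * q t + δ) + lam * (A + B * g t + C * q t) :=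
          add_le_add (hrecg t) h2
      _ = (1 - ρ) * (g t + lam * q t) + (δ + lam * A) := by
          linear_combination (g t) * hlamB - (q t) * hlamkey
  have hK : 0 ≤ δ + lam * A := add_nonneg hδ (mul_nonneg hlam0 hA)
  have main : ∀ t, g t + lam * q t ≤
      (1 - ρ) ^ t * (g 0 + lam * q 0) + (δ + lam * A) / ρ := by
    intro t
    induction t with
    | zero => simp; positivity
    | succ n ih =>
      calc g (n + 1) + lam * q (n + 1)
          ≤ (1 - ρ) * (g n + lam * q n) + (δ + lam * A) := hstep n
        _ ≤ (1 - ρ) * ((1 - ρ) ^ n * (g 0 + lam * q 0) + (δ + lam * A) / ρ)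
              + (δ + lam * A) := by
            gcongr
        _ = (1 - ρ) ^ (n + 1) * (g 0 + lam * q 0) + (δ + lam * A) / ρ := by
            field_simp
            ring
  exact ⟨hstep, fun t => le_trans (by nlinarith [mul_nonneg hlam0 (hq t)]) (main t)⟩
end

section
/- Let $(g_t)_{t \ge 0}$ be a nonnegative sequence satisfying $g_{t+1} \le g_t - \underline{a} g_t^2 + \beta g_t + \delta$ for all $t$, with $\underline{a} > 0$, $\beta \ge 0$, $\delta \ge 0$. Then for every integer $T \ge 1$, $\min_{0 \le t \le T-1} g_t \le \frac{\beta}{\underline{a}} + \sqrt{\frac{\delta}{\underline{a}}} + \sqrt{\frac{g_0}{\underline{a} T}}$. -/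
lemma my_sqrt_add_le {x y : ℝ} (hx : 0 ≤ x) (hy : 0 ≤ y) :
    Real.sqrt (x + y) ≤ Real.sqrt x + Real.sqrt y := by
  have hsx := Real.sqrt_nonneg x
  have hsy := Real.sqrt_nonneg y
  have h2 : x + y ≤ (Real.sqrt x + Real.sqrt y) ^ 2 := by
    nlinarith [Real.sq_sqrt hx, Real.sq_sqrt hy, mul_nonneg hsx hsy]
  calc Real.sqrt (x + y) ≤ Real.sqrt ((Real.sqrt x + Real.sqrt y) ^ 2) :=
        Real.sqrt_le_sqrt h2
    _ = Real.sqrt x + Real.sqrt y := Real.sqrt_sq (by linarith)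

theorem best_iterate_bound
    (g : ℕ → ℝ) (a β δ : ℝ)
    (hg : ∀ t, 0 ≤ g t) (ha : 0 < a) (hβ : 0 ≤ β) (hδ : 0 ≤ δ)
    (hrec : ∀ t, g (t + 1) ≤ g t - a * (g t) ^ 2 + β * g t + δ) :
    ∀ T : ℕ, 1 ≤ T →
      ∃ t < T, g t ≤ β / a + Real.sqrt (δ / a) + Real.sqrt (g 0 / (a * T)) := by
  intro T hT
  have hTne : (Finset.range T).Nonempty := ⟨0, Finset.mem_range.mpr hT⟩
  obtain ⟨t0, ht0mem, ht0min⟩ := Finset.exists_min_image (Finset.range T) g hTne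
  refine ⟨t0, Finset.mem_range.mp ht0mem, ?_⟩
  set m := g t0 with hm
  have hm0 : 0 ≤ m := hg t0
  have hs1 : 0 ≤ Real.sqrt (δ / a) := Real.sqrt_nonneg _
  have hs2 : 0 ≤ Real.sqrt (g 0 / (a * T)) := Real.sqrt_nonneg _
  set b : ℝ := β / a with hbdef
  have hb : a * b = β := by rw [hbdef]; field_simp
  have hba : 0 ≤ b := div_nonneg hβ ha.le
  by_cases hcase : m ≤ b
  · linarith
  push_neg at hcase
  -- sum bound
  have hsum : ∑ t ∈ Finset.range T, (a * g t ^ 2 - β * g t - δ) ≤ g 0 := by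
    have htel : ∑ t ∈ Finset.range T, (g t - g (t + 1)) = g 0 - g T :=
      Finset.sum_range_sub' g T
    have hle : ∑ t ∈ Finset.range T, (a * g t ^ 2 - β * g t - δ)
        ≤ ∑ t ∈ Finset.range T, (g t - g (t + 1)) := by
      refine Finset.sum_le_sum fun t _ => ?_
      have := hrec t
      linarith
    have := hg T
    linarith
  have hTpos : (0 : ℝ) < (T : ℝ) := by exact_mod_cast hT
  have h2 : β < a * m := by
    calc β = a * b := hb.symm
    _ < a * m := by exact (mul_lt_mul_iff_right₀ ha).mpr hcase
  have hterm : ∀ t ∈ Finset.range T, m * (a * m - β) - δ ≤ a * g t ^ 2 - β * g t - δ := by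
    intro t ht
    have h1 : m ≤ g t := ht0min t ht
    nlinarith [mul_nonneg (sub_nonneg.mpr h1) (sub_pos.mpr h2).le,
      mul_nonneg (hg t) (mul_nonneg ha.le (sub_nonneg.mpr h1))]
  have hcard : (T : ℝ) * (m * (a * m - β) - δ) ≤ ∑ t ∈ Finset.range T, (a * g t ^ 2 - β * g t - δ) := by
    have := Finset.card_nsmul_le_sum (Finset.range T) (fun t => a * g t ^ 2 - β * g t - δ)
      (m * (a * m - β) - δ) hterm
    simpa [nsmul_eq_mul] using this
  have hdiv : m * (a * m - β) - δ ≤ g 0 / T := by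
    rw [le_div_iff₀ hTpos]
    nlinarith [hcard.trans hsum]
  have hquad : a * m ^ 2 ≤ β * m + δ + g 0 / T := by nlinarith [hdiv]
  set c : ℝ := δ + g 0 / T with hc
  have hgT : 0 ≤ g 0 / (T : ℝ) := div_nonneg (hg 0) hTpos.le
  have hc0 : 0 ≤ c := add_nonneg hδ hgT
  set s : ℝ := Real.sqrt (c / a) with hsdef
  have hs0 : 0 ≤ s := Real.sqrt_nonneg _
  have hssq : s ^ 2 = c / a := Real.sq_sqrt (div_nonneg hc0 ha.le)
  have hmb : m ≤ b + s := by
    by_contra hcon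
    push_neg at hcon
    have hms : s ≤ m := by linarith
    have hmpos : 0 < m := by linarith
    have h1 : a * s ^ 2 = c := by
      rw [hssq]; field_simp
    have hquad' : a * m ^ 2 ≤ a * b * m + a * s ^ 2 := by
      rw [hb, h1, hc]; linarith [hquad]
    nlinarith [mul_pos (mul_pos ha hmpos) (sub_pos.mpr hcon),
      mul_nonneg (mul_nonneg ha.le hs0) (sub_nonneg.mpr hms)]
  have hsplit : s ≤ Real.sqrt (δ / a) + Real.sqrt (g 0 / (a * T)) := by
    have heq : c / a = δ / a + g 0 / (a * T) := by
      rw [hc]; field_simp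
    rw [hsdef, heq]
    exact my_sqrt_add_le (div_nonneg hδ ha.le)
      (div_nonneg (hg 0) (mul_nonneg ha.le hTpos.le))
  linarith
end
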